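/- In the setting of the previous expectation bound, for any $\delta_3>0$, defining $\Pi_\# := \frac{1}{|\Delta|}\sum_{v\in\Delta}\mathbb{1}[\eta_v\in A_\#]$ for $\#\in\{-,+\}$, one has $\mathbb{P}(\max\{\Pi_-,\Pi_+\} \ge 1-\delta_3) \ge 1 - 2(\delta_1+\delta_2)/\delta_3$. -/

import Mathlib

/-!
Let `Π₋, Π₊` be the fractions of sites in `A₋`, `A₊`. Since `Π₋ + Π₊ ≤ 1`,
`max Π₋ Π₊ ≥ Π₋² + Π₊² = (Π₋ + Π₊)² - 2 Π₋ Π₊`, so `1 - max Π₋ Π₊` is at most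
`Ψ := 2 (1 - Π₋ - Π₊) + 2 Π₋ Π₊`. Here `1 - Π₋ - Π₊` is the fraction of sites outside `A₋ ∪ A₊`
and `Π₋ Π₊` the fraction of pairs `(v, w)` with `η_v ∈ A₋`, `η_w ∈ A₊`, so `𝔼 Ψ ≤ 2 (δ₁ + δ₂)`,
and Markov's inequality bounds the probability that `1 - max Π₋ Π₊ ≥ δ₃`.
-/

open MeasureTheory

section EmpiricalFreq

variable {ι κ Ω : Type*} [Fintype ι] [Fintype κ]

/-- The paper's `Π_#` is `empiricalFreq (fun v => η v ⁻¹' A_#)`. -/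
noncomputable def empiricalFreq (s : ι → Set Ω) (ω : Ω) : ℝ :=
  (Fintype.card ι : ℝ)⁻¹ * ∑ i, (s i).indicator 1 ω

theorem empiricalFreq_nonneg (s : ι → Set Ω) (ω : Ω) : 0 ≤ empiricalFreq s ω :=
  mul_nonneg (by positivity) (Finset.sum_nonneg fun i _ => Set.indicator_nonneg (by simp) ω)

theorem empiricalFreq_union {s t : ι → Set Ω} (h : ∀ i, Disjoint (s i) (t i)) (ω : Ω) :
    empiricalFreq (fun i => s i ∪ t i) ω = empiricalFreq s ω + empiricalFreq t ω := by
  simp only [empiricalFreq, Set.indicator_union_of_disjoint (h _), Finset.sum_add_distrib,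
    mul_add]

theorem empiricalFreq_compl [Nonempty ι] (s : ι → Set Ω) (ω : Ω) :
    empiricalFreq (fun i => (s i)ᶜ) ω = 1 - empiricalFreq s ω := by
  have hcard : (Fintype.card ι : ℝ) ≠ 0 := by positivity
  simp only [empiricalFreq, Set.indicator_compl, Pi.sub_apply, Pi.one_apply,
    Finset.sum_sub_distrib, Finset.sum_const, Finset.card_univ, nsmul_eq_mul, mul_one]
  field_simp

theorem empiricalFreq_mul (s : ι → Set Ω) (t : κ → Set Ω) (ω : Ω) :
    empiricalFreq s ω * empiricalFreq t ω =
      empiricalFreq (fun p : ι × κ => s p.1 ∩ t p.2) ω := by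
  simp only [empiricalFreq, Set.inter_indicator_one, Pi.mul_apply, Fintype.card_prod,
    Nat.cast_mul, mul_inv, Fintype.sum_prod_type, ← Finset.sum_mul_sum]
  ring

variable [MeasurableSpace Ω] {s : ι → Set Ω}

theorem measurable_empiricalFreq (hs : ∀ i, MeasurableSet (s i)) :
    Measurable (empiricalFreq s) :=
  (Finset.measurable_sum _ fun i _ => measurable_const.indicator (hs i)).const_mul _

theorem integrable_indicator_one (μ : Measure Ω) [IsFiniteMeasure μ] {A : Set Ω}
    (hA : MeasurableSet A) : Integrable (A.indicator (1 : Ω → ℝ)) μ :=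
  (integrable_const 1).indicator hA

theorem integrable_empiricalFreq (μ : Measure Ω) [IsFiniteMeasure μ]
    (hs : ∀ i, MeasurableSet (s i)) : Integrable (empiricalFreq s) μ :=
  (integrable_finsetSum _ fun i _ => integrable_indicator_one μ (hs i)).const_mul _

theorem integral_empiricalFreq (μ : Measure Ω) [IsFiniteMeasure μ]
    (hs : ∀ i, MeasurableSet (s i)) :
    ∫ ω, empiricalFreq s ω ∂μ = (Fintype.card ι : ℝ)⁻¹ * ∑ i, μ.real (s i) := by
  simp only [empiricalFreq, integral_const_mul]
  rw [integral_finsetSum _ fun i _ => integrable_indicator_one μ (hs i)]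
  simp only [integral_indicator_one (hs _)]

theorem integral_empiricalFreq_le [Nonempty ι] (μ : Measure Ω) [IsFiniteMeasure μ]
    (hs : ∀ i, MeasurableSet (s i)) {δ : ℝ} (h : ∀ i, μ.real (s i) ≤ δ) :
    ∫ ω, empiricalFreq s ω ∂μ ≤ δ := by
  have hcard : (0 : ℝ) < Fintype.card ι := by positivity
  rw [integral_empiricalFreq μ hs, inv_mul_le_iff₀ hcard]
  calc ∑ i, μ.real (s i) ≤ ∑ _i : ι, δ := Finset.sum_le_sum fun i _ => h i
    _ = Fintype.card ι * δ := by simp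

end EmpiricalFreq

theorem one_sub_max_le {p q : ℝ} (hp : 0 ≤ p) (hq : 0 ≤ q) (hpq : p + q ≤ 1) :
    1 - max p q ≤ 2 * (1 - (p + q)) + 2 * (p * q) := by
  have hsq : p ^ 2 + q ^ 2 ≤ max p q := by
    nlinarith [le_max_left p q, le_max_right p q]
  nlinarith

theorem one_sub_max_empiricalFreq_le {ι Ω : Type*} [Fintype ι] [Nonempty ι] {s t : ι → Set Ω}
    (hst : ∀ i, Disjoint (s i) (t i)) (ω : Ω) :
    1 - max (empiricalFreq s ω) (empiricalFreq t ω) ≤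
      2 * empiricalFreq (fun i => (s i ∪ t i)ᶜ) ω +
        2 * empiricalFreq (fun p : ι × ι => s p.1 ∩ t p.2) ω := by
  have hout : empiricalFreq (fun i => (s i ∪ t i)ᶜ) ω =
      1 - (empiricalFreq s ω + empiricalFreq t ω) := by
    rw [empiricalFreq_compl (fun i => s i ∪ t i), empiricalFreq_union hst]
  rw [hout, ← empiricalFreq_mul]
  refine one_sub_max_le (empiricalFreq_nonneg s ω) (empiricalFreq_nonneg t ω) ?_
  linarith [hout ▸ empiricalFreq_nonneg (fun i => (s i ∪ t i)ᶜ) ω]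

theorem le_measureReal_max_empiricalFreq {ι Ω : Type*} [Fintype ι] [Nonempty ι]
    [MeasurableSpace Ω] (μ : Measure Ω) [IsProbabilityMeasure μ] {s t : ι → Set Ω}
    (hs : ∀ i, MeasurableSet (s i)) (ht : ∀ i, MeasurableSet (t i))
    (hst : ∀ i, Disjoint (s i) (t i)) {δ₁ δ₂ δ₃ : ℝ} (hδ₃ : 0 < δ₃)
    (h₁ : ∀ i, μ.real (s i ∪ t i)ᶜ ≤ δ₁) (h₂ : ∀ i j, μ.real (s i ∩ t j) ≤ δ₂) :
    1 - 2 * (δ₁ + δ₂) / δ₃ ≤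
      μ.real {ω | 1 - δ₃ ≤ max (empiricalFreq s ω) (empiricalFreq t ω)} := by
  have hout : ∀ i, MeasurableSet (s i ∪ t i)ᶜ := fun i => ((hs i).union (ht i)).compl
  have hpair : ∀ p : ι × ι, MeasurableSet (s p.1 ∩ t p.2) := fun p => (hs p.1).inter (ht p.2)
  set Ψ : Ω → ℝ := fun ω => 2 * empiricalFreq (fun i => (s i ∪ t i)ᶜ) ω +
    2 * empiricalFreq (fun p : ι × ι => s p.1 ∩ t p.2) ω
  have hΨ_int : Integrable Ψ μ :=
    ((integrable_empiricalFreq μ hout).const_mul 2).add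
      ((integrable_empiricalFreq μ hpair).const_mul 2)
  have hΨ_nonneg : 0 ≤ᵐ[μ] Ψ := Filter.Eventually.of_forall fun ω =>
    add_nonneg (mul_nonneg zero_le_two (empiricalFreq_nonneg _ ω))
      (mul_nonneg zero_le_two (empiricalFreq_nonneg _ ω))
  have hEΨ : ∫ ω, Ψ ω ∂μ ≤ 2 * (δ₁ + δ₂) := by
    rw [integral_add ((integrable_empiricalFreq μ hout).const_mul 2)
      ((integrable_empiricalFreq μ hpair).const_mul 2), integral_const_mul, integral_const_mul]
    linarith [integral_empiricalFreq_le μ hout h₁,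
      integral_empiricalFreq_le μ hpair fun p => h₂ p.1 p.2]
  have hmarkov : μ.real {ω | δ₃ ≤ Ψ ω} ≤ 2 * (δ₁ + δ₂) / δ₃ := by
    rw [le_div_iff₀ hδ₃, mul_comm]
    exact (mul_meas_ge_le_integral_of_nonneg hΨ_nonneg hΨ_int δ₃).trans hEΨ
  have hE : MeasurableSet {ω | 1 - δ₃ ≤ max (empiricalFreq s ω) (empiricalFreq t ω)} :=
    measurableSet_le measurable_const
      ((measurable_empiricalFreq hs).max (measurable_empiricalFreq ht))
  have hsub : {ω | 1 - δ₃ ≤ max (empiricalFreq s ω) (empiricalFreq t ω)}ᶜ ⊆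
      {ω | δ₃ ≤ Ψ ω} := fun ω hω => by
    simp only [Set.mem_compl_iff, Set.mem_ofPred_eq, not_le] at hω ⊢
    linarith [one_sub_max_empiricalFreq_le hst ω]
  linarith [probReal_compl_eq_one_sub (μ := μ) hE, measureReal_mono (μ := μ) hsub]

open Classical in
theorem stmt_3 {Ω : Type*} [MeasurableSpace Ω] (ℙ : Measure Ω) [IsProbabilityMeasure ℙ]
    {S : Type*} [MeasurableSpace S] (Am Ap : Set S)
    (hAm : MeasurableSet Am) (hAp : MeasurableSet Ap) (hdisj : Disjoint Am Ap)
    {Δ : Type*} [Fintype Δ] [Nonempty Δ] (η : Δ → Ω → S) (hη : ∀ v, Measurable (η v))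
    (δ₁ δ₂ δ₃ : ℝ) (hδ₃ : 0 < δ₃)
    (h1 : ∀ v : Δ, (ℙ {ω | η v ω ∉ Am ∪ Ap}).toReal ≤ δ₁)
    (h2 : ∀ v w : Δ, (ℙ {ω | η v ω ∈ Am ∧ η w ω ∈ Ap}).toReal ≤ δ₂) :
    1 - 2 * (δ₁ + δ₂) / δ₃ ≤
      (ℙ {ω | 1 - δ₃ ≤
        max ((Fintype.card Δ : ℝ)⁻¹ * ∑ v : Δ, (if η v ω ∈ Am then (1:ℝ) else 0))
            ((Fintype.card Δ : ℝ)⁻¹ * ∑ v : Δ, (if η v ω ∈ Ap then (1:ℝ) else 0))}).toReal :=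
  le_measureReal_max_empiricalFreq ℙ (s := fun v => η v ⁻¹' Am) (t := fun v => η v ⁻¹' Ap)
    (fun v => hη v hAm) (fun v => hη v hAp) (fun _ => hdisj.preimage _) hδ₃ h1 h2
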